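/- Let Δ° ⊂ ℝ^5 be the convex hull of the columns of the matrix with rows (1,0,0,0,0,-1), (0,1,0,0,0,-1), (0,0,1,0,0,-6), (0,0,0,1,0,-9), (0,0,0,0,1,-18). Then Δ° is a reflexive polytope whose polar dual Δ contains the six points given as columns of the matrix with rows (35,-1,-1,-1,-1,-1), (-1,35,-1,-1,-1,-1), (-1,-1,-1,-1,5,-1), (-1,-1,3,-1,-1,-1), (-1,-1,-1,1,-1,-1) as vertices. -/

import Mathlib

/-!
With `q = (1, 1, 6, 9, 18)`, `Δ° = conv(e₁, …, e₅, -q)` is the simplex of the weighted projective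
space `ℙ(1, 1, 1, 6, 9, 18)`. The origin has the strictly positive barycentric coordinates
`qᵢ / 36` and `1 / 36`, so it is interior. The polar dual is cut out by the six facet inequalities
`mᵢ ≥ -1` and `⟨m, q⟩ ≤ 1`, so it is the simplex with vertices `-𝟙` and `-𝟙 + (36 / q_j) e_j`,
which are lattice points because every weight divides `1 + ∑ q = 36`. Each of these vertices is
the unique maximiser on `Δ` of a linear functional (`-∑ mᵢ`, resp. `m_j`), hence extreme.
-/

open Set Finset

theorem mem_extremePoints_of_unique_maximizer {𝕜 E : Type*} [Field 𝕜] [LinearOrder 𝕜]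
    [IsStrictOrderedRing 𝕜] [AddCommGroup E] [Module 𝕜 E] {A : Set E} {w : E} (ℓ : E →ₗ[𝕜] 𝕜)
    (hw : w ∈ A) (hmax : ∀ y ∈ A, ℓ y ≤ ℓ w) (hunique : ∀ y ∈ A, ℓ w ≤ ℓ y → y = w) :
    w ∈ A.extremePoints 𝕜 := by
  refine mem_extremePoints_iff_left.2 ⟨hw, fun x₁ hx₁ x₂ hx₂ ⟨a, b, ha, hb, hab, hw'⟩ => ?_⟩
  refine hunique x₁ hx₁ ?_
  have h₂ := hmax x₂ hx₂
  have hcomb : ℓ w = a * ℓ x₁ + b * ℓ x₂ := by rw [← hw']; simp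
  by_contra! h
  have hw_eq : ℓ w = (a + b) * ℓ w := by rw [hab, one_mul]
  nlinarith [mul_pos ha (sub_pos.2 h), mul_nonneg hb.le (sub_nonneg.2 h₂)]

theorem add_sum_smul_mem_convexHull_insert {E ι : Type*} [AddCommGroup E] [Module ℝ E] [Fintype ι]
    (a : E) (v : ι → E) {t : ℝ} {μ : ι → ℝ} (ht : 0 ≤ t) (hμ : ∀ i, 0 ≤ μ i)
    (hsum : t + ∑ i, μ i = 1) :
    t • a + ∑ i, μ i • v i ∈ convexHull ℝ (insert a (range v)) := by
  have := (convex_convexHull ℝ (insert a (range v))).sum_mem (t := univ)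
    (w := fun o : Option ι => o.elim t μ) (z := fun o => o.elim a v)
    (fun o _ => by cases o <;> simp [ht, hμ]) (by simpa [Fintype.sum_option] using hsum)
    (fun o _ => subset_convexHull ℝ _ (by cases o <;> simp))
  simpa [Fintype.sum_option] using this

def polarDual {n : ℕ} (P : Set (Fin n → ℝ)) : Set (Fin n → ℝ) := {m | ∀ x ∈ P, -1 ≤ m ⬝ᵥ x}

theorem polarDual_convexHull {n : ℕ} (s : Set (Fin n → ℝ)) :
    polarDual (convexHull ℝ s) = polarDual s := by
  refine Subset.antisymm (fun m hm x hx => hm x (subset_convexHull ℝ s hx)) fun m hm => ?_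
  have : Convex ℝ {x : Fin n → ℝ | -1 ≤ m ⬝ᵥ x} :=
    convex_halfSpace_ge ⟨dotProduct_add m, fun c x => dotProduct_smul c m x⟩ _
  exact fun x hx => convexHull_min hm this hx

theorem convex_polarDual {n : ℕ} (P : Set (Fin n → ℝ)) : Convex ℝ (polarDual P) := by
  simp only [polarDual, ofPred_forall]
  exact convex_iInter₂ fun x _ =>
    convex_halfSpace_ge ⟨fun m m' => add_dotProduct m m' x, fun c m => smul_dotProduct c m x⟩ _

theorem exists_finset_image_intCast_eq {n : ℕ} {s : Set (Fin n → ℝ)} (hs : s.Finite)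
    (hint : s ⊆ range fun v : Fin n → ℤ => fun i => (v i : ℝ)) :
    ∃ T : Finset (Fin n → ℤ), (fun v : Fin n → ℤ => fun i => (v i : ℝ)) '' T = s := by
  have hinj : Function.Injective fun v : Fin n → ℤ => fun i => (v i : ℝ) :=
    fun v w h => funext fun i => Int.cast_injective (congrFun h i)
  refine ⟨(hs.preimage hinj.injOn).toFinset, ?_⟩
  rw [Finite.coe_toFinset, image_preimage_eq_of_subset hint]

noncomputable section

namespace WeightedSimplex

variable {n : ℕ} (q : Fin n → ℝ)

def vertices : Set (Fin n → ℝ) := insert (-q) (range fun i => Pi.single i 1)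

def dual : Set (Fin n → ℝ) := {m | (∀ i, -1 ≤ m i) ∧ m ⬝ᵥ q ≤ 1}

def dualVertex (j : Fin n) : Fin n → ℝ := -1 + Pi.single j ((1 + ∑ i, q i) / q j)

def dualVertices : Set (Fin n → ℝ) := insert (-1) (range (dualVertex q))

theorem polarDual_vertices : polarDual (vertices q) = dual q := by
  ext m
  simp [polarDual, vertices, dual, dotProduct_neg, and_comm]

variable {q}

theorem one_add_sum_pos (hq : ∀ i, 0 < q i) : 0 < 1 + ∑ i, q i :=
  add_pos_of_pos_of_nonneg one_pos (sum_nonneg fun i _ => (hq i).le)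

theorem zero_mem_interior_convexHull_vertices (hq : ∀ i, 0 < q i) :
    (0 : Fin n → ℝ) ∈ interior (convexHull ℝ (vertices q)) := by
  set t : (Fin n → ℝ) → ℝ := fun x => (1 - ∑ i, x i) / (1 + ∑ i, q i)
  have hS := one_add_sum_pos hq
  have ht : Continuous t := by fun_prop
  let U : Set (Fin n → ℝ) := {x | 0 < t x} ∩ ⋂ i, {x | 0 < x i + t x * q i}
  have hU : IsOpen U :=
    (isOpen_lt continuous_const ht).inter
      (isOpen_iInter_of_finite fun i => isOpen_lt continuous_const (by fun_prop))
  have h0U : (0 : Fin n → ℝ) ∈ U := by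
    simp only [U, t, mem_inter_iff, mem_ofPred_eq, mem_iInter]
    simp only [Pi.zero_apply, Finset.sum_const_zero, sub_zero, zero_add]
    exact ⟨by positivity, fun i => mul_pos (by positivity) (hq i)⟩
  refine interior_maximal (fun x hx => ?_) hU h0U
  simp only [U, mem_inter_iff, mem_ofPred_eq, mem_iInter] at hx
  have hsum : t x + ∑ i, (x i + t x * q i) = 1 := by
    have htx : t x * (1 + ∑ i, q i) = 1 - ∑ i, x i := div_mul_cancel₀ _ hS.ne'
    rw [sum_add_distrib, ← mul_sum]
    linear_combination htx
  have hx_eq : x = t x • (-q) + ∑ i, (x i + t x * q i) • Pi.single i (1 : ℝ) := by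
    ext k
    simp [Finset.sum_apply, Pi.single_apply]
  rw [hx_eq]
  exact add_sum_smul_mem_convexHull_insert _ _ hx.1.le (fun i => (hx.2 i).le) hsum

theorem sum_add_one_mul_le_of_mem_dual {y : Fin n → ℝ} (hy : y ∈ dual q) :
    ∑ i, (y i + 1) * q i ≤ 1 + ∑ i, q i := by
  have : ∑ i, (y i + 1) * q i = y ⬝ᵥ q + ∑ i, q i := by
    simp [dotProduct, add_mul, sum_add_distrib]
  linarith [hy.2]

theorem dual_eq_convexHull_dualVertices (hq : ∀ i, 0 < q i) :
    dual q = convexHull ℝ (dualVertices q) := by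
  have hS := one_add_sum_pos hq
  refine Subset.antisymm (fun m hm => ?_) (convexHull_min ?_ ?_)
  · set t := (1 - m ⬝ᵥ q) / (1 + ∑ i, q i)
    set μ : Fin n → ℝ := fun j => (m j + 1) * q j / (1 + ∑ i, q i)
    have hsum : t + ∑ j, μ j = 1 := by
      simp only [t, μ, ← sum_div]
      field_simp
      simp [dotProduct, add_mul, sum_add_distrib]
      ring
    have hm_eq : m = t • (-1) + ∑ j, μ j • dualVertex q j := by
      ext k
      have hμk : μ k * ((1 + ∑ i, q i) / q k) = m k + 1 := by
        simp only [μ]; field_simp [(hq k).ne']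
      simp [dualVertex, Finset.sum_apply, Pi.single_apply, sum_add_distrib]
      linear_combination hsum - hμk
    rw [hm_eq]
    exact add_sum_smul_mem_convexHull_insert _ _ (div_nonneg (by linarith [hm.2]) hS.le)
      (fun j => div_nonneg (mul_nonneg (by linarith [hm.1 j]) (hq j).le) hS.le) hsum
  · rintro _ (rfl | ⟨j, rfl⟩)
    · refine ⟨fun i => le_rfl, ?_⟩
      simp only [neg_dotProduct, one_dotProduct]
      linarith
    · refine ⟨fun i => ?_, ?_⟩
      · simp only [dualVertex, Pi.add_apply, Pi.neg_apply, Pi.one_apply, le_add_iff_nonneg_right]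
        exact (Pi.single_nonneg.2 (div_nonneg hS.le (hq j).le) : (0 : Fin n → ℝ) ≤ _) i
      · simp [dualVertex, add_dotProduct, neg_dotProduct, one_dotProduct, (hq j).ne']
  · rw [← polarDual_vertices]; exact convex_polarDual _

theorem neg_one_mem_extremePoints_dual (hq : ∀ i, 0 < q i) :
    (-1 : Fin n → ℝ) ∈ (dual q).extremePoints ℝ := by
  have hslack : ∀ y ∈ dual q, ∀ i ∈ Finset.univ, 0 ≤ y i + 1 := fun y hy i _ => by linarith [hy.1 i]
  refine mem_extremePoints_of_unique_maximizer (-dotProductBilin ℝ ℝ 1)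
    (dual_eq_convexHull_dualVertices hq ▸ subset_convexHull ℝ _ (mem_insert _ _))
    (fun y hy => ?_) (fun y hy hle => ?_)
  · have := sum_nonneg (hslack y hy)
    simp [sum_add_distrib, one_dotProduct] at this ⊢
    linarith
  · have hsum : ∑ i, (y i + 1) = 0 := by
      refine le_antisymm ?_ (sum_nonneg (hslack y hy))
      simp [sum_add_distrib, one_dotProduct] at hle ⊢
      linarith
    have hzero := (sum_eq_zero_iff_of_nonneg (hslack y hy)).1 hsum
    ext i
    simp [eq_neg_iff_add_eq_zero, hzero i (mem_univ i)]

theorem dualVertex_mem_extremePoints_dual (hq : ∀ i, 0 < q i) (j : Fin n) :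
    dualVertex q j ∈ (dual q).extremePoints ℝ := by
  have hslack : ∀ y ∈ dual q, ∀ i ∈ Finset.univ, 0 ≤ (y i + 1) * q i :=
    fun y hy i _ => mul_nonneg (by linarith [hy.1 i]) (hq i).le
  have hj : dualVertex q j j = -1 + (1 + ∑ i, q i) / q j := by simp [dualVertex]
  have hmax : ∀ y ∈ dual q, y j ≤ dualVertex q j j := fun y hy => by
    have := (le_div_iff₀ (hq j)).2 <|
      (single_le_sum (hslack y hy) (mem_univ j)).trans (sum_add_one_mul_le_of_mem_dual hy)
    linarith
  refine mem_extremePoints_of_unique_maximizer (LinearMap.proj j)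
    (dual_eq_convexHull_dualVertices hq ▸ subset_convexHull ℝ _ (mem_insert_of_mem _ ⟨j, rfl⟩))
    hmax (fun y hy hle => ?_)
  rw [LinearMap.proj_apply, LinearMap.proj_apply] at hle
  have hyj := (div_le_iff₀ (hq j)).1 (by linarith : (1 + ∑ i, q i) / q j ≤ y j + 1)
  have hrest : ∑ i ∈ univ.erase j, (y i + 1) * q i = 0 := by
    refine le_antisymm ?_ (sum_nonneg fun i hi => hslack y hy i (mem_of_mem_erase hi))
    have := sum_add_one_mul_le_of_mem_dual hy
    rw [← add_sum_erase _ _ (mem_univ j)] at this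
    linarith
  have hzero := (sum_eq_zero_iff_of_nonneg fun i hi => hslack y hy i (mem_of_mem_erase hi)).1 hrest
  ext i
  rcases eq_or_ne i j with rfl | hij
  · exact le_antisymm (hmax y hy) hle
  · have := hzero i (mem_erase.2 ⟨hij, mem_univ i⟩)
    simp [dualVertex, hij, (hq i).ne', add_eq_zero_iff_eq_neg] at this ⊢
    exact this

theorem dualVertices_subset_extremePoints_dual (hq : ∀ i, 0 < q i) :
    dualVertices q ⊆ (dual q).extremePoints ℝ := by
  rintro _ (rfl | ⟨j, rfl⟩)
  exacts [neg_one_mem_extremePoints_dual hq, dualVertex_mem_extremePoints_dual hq j]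

theorem dualVertices_subset_range_intCast (hdvd : ∀ j, ∃ k : ℤ, (1 + ∑ i, q i) / q j = k) :
    dualVertices q ⊆ range fun v : Fin n → ℤ => fun i => (v i : ℝ) := by
  rintro _ (rfl | ⟨j, rfl⟩)
  · exact ⟨-1, by ext; simp⟩
  · obtain ⟨k, hk⟩ := hdvd j
    refine ⟨-1 + Pi.single j k, ?_⟩
    ext i
    simp [dualVertex, hk, Pi.single_apply]

end WeightedSimplex

end

theorem e7_vertices_eq :
    ({![1,0,0,0,0], ![0,1,0,0,0], ![0,0,1,0,0], ![0,0,0,1,0], ![0,0,0,0,1],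
      ![-1,-1,-6,-9,-18]} : Set (Fin 5 → ℝ)) = WeightedSimplex.vertices ![1,1,6,9,18] := by
  have : (fun i : Fin 5 => (Pi.single i 1 : Fin 5 → ℝ)) =
      ![![1,0,0,0,0], ![0,1,0,0,0], ![0,0,1,0,0], ![0,0,0,1,0], ![0,0,0,0,1]] := by
    ext i j; fin_cases i <;> fin_cases j <;> rfl
  rw [WeightedSimplex.vertices, this]
  ext x
  simp [Matrix.range_cons, Matrix.range_empty]
  tauto

theorem e7_listed_points_subset_dualVertices :
    ({![35,-1,-1,-1,-1], ![-1,35,-1,-1,-1], ![-1,-1,-1,3,-1], ![-1,-1,-1,-1,1],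
      ![-1,-1,5,-1,-1], ![-1,-1,-1,-1,-1]} : Set (Fin 5 → ℝ)) ⊆
      WeightedSimplex.dualVertices ![1,1,6,9,18] := by
  have hvertex : WeightedSimplex.dualVertex ![1,1,6,9,18] = ![![35,-1,-1,-1,-1],
      ![-1,35,-1,-1,-1], ![-1,-1,5,-1,-1], ![-1,-1,-1,3,-1], ![-1,-1,-1,-1,1]] := by
    ext i j
    fin_cases i <;> fin_cases j <;> simp [WeightedSimplex.dualVertex, Fin.sum_univ_five] <;> norm_num
  have hneg : (-1 : Fin 5 → ℝ) = ![-1,-1,-1,-1,-1] := by ext i; fin_cases i <;> rfl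
  rw [WeightedSimplex.dualVertices, hvertex, hneg]
  intro x
  simp [Matrix.range_cons, Matrix.range_empty]
  tauto

open WeightedSimplex in
/-- The E₇-model polytope Δ° = conv(e₁,…,e₅,(-1,-1,-6,-9,-18)) ⊂ ℝ^5 is reflexive,
and its polar dual contains the six listed points as vertices (extreme points). -/
theorem e7_model_polytope_reflexive_and_dual_vertices :
    (0 : Fin 5 → ℝ) ∈ interior (convexHull ℝ
        ({![1,0,0,0,0], ![0,1,0,0,0], ![0,0,1,0,0], ![0,0,0,1,0], ![0,0,0,0,1],
          ![-1,-1,-6,-9,-18]} : Set (Fin 5 → ℝ))) ∧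
    (∃ T : Finset (Fin 5 → ℤ),
      {m : Fin 5 → ℝ |
        ∀ x ∈ convexHull ℝ
          ({![1,0,0,0,0], ![0,1,0,0,0], ![0,0,1,0,0], ![0,0,0,1,0], ![0,0,0,0,1],
            ![-1,-1,-6,-9,-18]} : Set (Fin 5 → ℝ)),
        -1 ≤ ∑ i, m i * x i} =
      convexHull ℝ ((fun v : Fin 5 → ℤ => fun i => (v i : ℝ)) '' (T : Set (Fin 5 → ℤ)))) ∧
    (∀ w ∈ ({![35,-1,-1,-1,-1], ![-1,35,-1,-1,-1], ![-1,-1,-1,3,-1],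
        ![-1,-1,-1,-1,1], ![-1,-1,5,-1,-1], ![-1,-1,-1,-1,-1]} : Set (Fin 5 → ℝ)),
      w ∈ Set.extremePoints ℝ
        {m : Fin 5 → ℝ |
          ∀ x ∈ convexHull ℝ
            ({![1,0,0,0,0], ![0,1,0,0,0], ![0,0,1,0,0], ![0,0,0,1,0], ![0,0,0,0,1],
              ![-1,-1,-6,-9,-18]} : Set (Fin 5 → ℝ)),
          -1 ≤ ∑ i, m i * x i}) := by
  have hq : ∀ i, 0 < (![1, 1, 6, 9, 18] : Fin 5 → ℝ) i := by
    intro i; fin_cases i <;> norm_num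
  have hdvd : ∀ j, ∃ k : ℤ,
      (1 + ∑ i, (![1, 1, 6, 9, 18] : Fin 5 → ℝ) i) / ![1, 1, 6, 9, 18] j = k := by
    have hS : 1 + ∑ i, (![1, 1, 6, 9, 18] : Fin 5 → ℝ) i = 36 := by
      simp [Fin.sum_univ_five]; norm_num
    intro j; rw [hS]; fin_cases j
    exacts [⟨36, by norm_num⟩, ⟨36, by norm_num⟩, ⟨6, by norm_num⟩, ⟨4, by norm_num⟩,
      ⟨2, by norm_num⟩]
  have hpolar : polarDual (convexHull ℝ (vertices ![1, 1, 6, 9, 18])) =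
      convexHull ℝ (dualVertices ![1, 1, 6, 9, 18]) := by
    rw [polarDual_convexHull, polarDual_vertices, dual_eq_convexHull_dualVertices hq]
  rw [e7_vertices_eq]
  refine ⟨zero_mem_interior_convexHull_vertices hq, ?_, fun w hw => ?_⟩
  · obtain ⟨T, hT⟩ := exists_finset_image_intCast_eq ((finite_range _).insert _)
      (dualVertices_subset_range_intCast hdvd)
    exact ⟨T, by rw [hT]; exact hpolar⟩
  · show w ∈ (polarDual _).extremePoints ℝ
    rw [hpolar, ← dual_eq_convexHull_dualVertices hq]
    exact dualVertices_subset_extremePoints_dual hq (e7_listed_points_subset_dualVertices hw)
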